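/- arXiv:2002.12594 — 7 statements merged into one kernel-verified Lean document; each statement's English description precedes it below -/
import Mathlib

section
/- For every n ∈ ℕ divisible by 4, there is an n-vertex graph G with δ(G) = 3n/4 and an edge labelling f: E(G) → {−1,1} for which every Hamilton cycle of G has discrepancy 0 (with respect to f). -/
/-!
Let `A` be a set of `n/4` vertices and take the complete split graph with independent part `A`:
vertices of `A` have degree `3n/4`, all others degree `n - 1`. Label an edge `-1` if it meets `A`
and `+1` otherwise. With the vertex weights `H = -3` on `A` and `H = 1` off `A`, every edge
`xy` has label `(H x + H y) / 2`. Every vertex lies on exactly two edges of a Hamilton cycle, so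
the discrepancy of any Hamilton cycle is `∑ v, H v = -3 · n/4 + 3n/4 = 0`.
-/

open Finset

namespace SimpleGraph

variable {V : Type*} {G : SimpleGraph V}

namespace Walk

theorem dropLast_support_perm_tail {u : V} (p : G.Walk u u) :
    p.support.dropLast.Perm p.support.tail := by
  refine (List.perm_cons u).1 ?_
  have h := (List.perm_append_singleton u p.support.dropLast).symm
  rw [p.dropLast_support_concat] at h
  exact h.trans (.of_eq p.cons_tail_support.symm)

theorem IsHamiltonian.sum_map_support [Fintype V] [DecidableEq V] {M : Type*} [AddCommMonoid M]
    {u v : V} {p : G.Walk u v} (hp : p.IsHamiltonian) (H : V → M) :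
    (p.support.map H).sum = ∑ v, H v := by
  rw [← List.sum_toFinset H hp.isPath.support_nodup, hp.toFinset_support]

theorem IsHamiltonianCycle.sum_map_support_tail [Fintype V] [DecidableEq V] {M : Type*}
    [AddCommMonoid M] {u : V} {p : G.Walk u u} (hp : p.IsHamiltonianCycle) (H : V → M) :
    (p.support.tail.map H).sum = ∑ v, H v := by
  rw [← p.support_tail_of_not_nil hp.isCycle.not_nil, hp.isHamiltonian_tail.sum_map_support]

theorem IsHamiltonianCycle.sum_edges_eq_two_nsmul [Fintype V] [DecidableEq V] {M : Type*}
    [AddCommMonoid M] {u : V} {p : G.Walk u u} (hp : p.IsHamiltonianCycle) (f : Sym2 V → M)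
    (H : V → M) (hf : ∀ x y, G.Adj x y → f s(x, y) = H x + H y) :
    ∑ e ∈ p.edges.toFinset, f e = 2 • ∑ v, H v := by
  calc ∑ e ∈ p.edges.toFinset, f e
      = (p.darts.map fun d => H d.fst + H d.snd).sum := by
        rw [List.sum_toFinset f hp.isCycle.edges_nodup, edges, List.map_map]
        congr 1
        exact List.map_congr_left fun d _ => hf _ _ d.adj
    _ = (p.support.dropLast.map H).sum + (p.support.tail.map H).sum := by
        rw [List.sum_map_add, ← p.map_fst_darts, ← p.map_snd_darts, List.map_map, List.map_map]
        rfl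
    _ = 2 • ∑ v, H v := by
        rw [(p.dropLast_support_perm_tail.map H).sum_eq, hp.sum_map_support_tail, two_nsmul]

end Walk

def completeSplitGraph [DecidableEq V] (A : Finset V) : SimpleGraph V where
  Adj u v := u ≠ v ∧ ¬(u ∈ A ∧ v ∈ A)

@[simp]
theorem completeSplitGraph_adj [DecidableEq V] {A : Finset V} {u v : V} :
    (completeSplitGraph A).Adj u v ↔ u ≠ v ∧ ¬(u ∈ A ∧ v ∈ A) :=
  Iff.rfl

section CompleteSplit

variable [Fintype V] [DecidableEq V] (A : Finset V)

theorem neighborFinset_completeSplitGraph_of_mem [DecidableRel (completeSplitGraph A).Adj]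
    {v : V} (hv : v ∈ A) : (completeSplitGraph A).neighborFinset v = Aᶜ := by
  ext w
  simp only [mem_neighborFinset, completeSplitGraph_adj, mem_compl]
  grind

theorem neighborFinset_completeSplitGraph_of_notMem [DecidableRel (completeSplitGraph A).Adj]
    {v : V} (hv : v ∉ A) : (completeSplitGraph A).neighborFinset v = univ.erase v := by
  ext w
  simp only [mem_neighborFinset, completeSplitGraph_adj, mem_erase, mem_univ]
  grind

theorem minDegree_completeSplitGraph [DecidableRel (completeSplitGraph A).Adj]
    (hA : A.Nonempty) : (completeSplitGraph A).minDegree = #Aᶜ := by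
  obtain ⟨a, ha⟩ := hA
  have hdeg_a : (completeSplitGraph A).degree a = #Aᶜ := by
    rw [← card_neighborFinset_eq_degree, neighborFinset_completeSplitGraph_of_mem A ha]
  refine le_antisymm (hdeg_a ▸ minDegree_le_degree _ a) ?_
  have : Nonempty V := ⟨a⟩
  refine le_minDegree_of_forall_le_degree _ _ fun v => ?_
  rw [← card_neighborFinset_eq_degree]
  by_cases hv : v ∈ A
  · rw [neighborFinset_completeSplitGraph_of_mem A hv]
  · rw [neighborFinset_completeSplitGraph_of_notMem A hv, card_erase_of_mem (mem_univ v),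
      card_univ, ← card_compl_add_card A]
    have := A.card_pos.2 ⟨a, ha⟩
    omega

def splitLabelling (e : Sym2 V) : ℤ := if e ∈ Aᶜ.sym2 then 1 else -1

theorem splitLabelling_eq_one_or_eq_neg_one (e : Sym2 V) :
    splitLabelling A e = 1 ∨ splitLabelling A e = -1 := by
  unfold splitLabelling
  split_ifs <;> simp

def splitPotential (v : V) : ℤ := if v ∈ A then -3 else 1

theorem two_mul_splitLabelling {x y : V} (h : (completeSplitGraph A).Adj x y) :
    2 * splitLabelling A s(x, y) = splitPotential A x + splitPotential A y := by
  rw [completeSplitGraph_adj] at h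
  by_cases hx : x ∈ A <;> by_cases hy : y ∈ A <;>
    simp_all [splitLabelling, splitPotential]

theorem sum_splitPotential : ∑ v, splitPotential A v = #Aᶜ - 3 * #A := by
  rw [← sum_add_sum_compl A,
    sum_congr rfl fun v hv => show splitPotential A v = -3 from if_pos hv,
    sum_congr rfl fun v hv => show splitPotential A v = 1 from if_neg (mem_compl.1 hv)]
  simp only [sum_const, nsmul_eq_mul, mul_one]
  ring

theorem Walk.IsHamiltonianCycle.sum_splitLabelling (hA : #Aᶜ = 3 * #A) {u : V}
    {p : (completeSplitGraph A).Walk u u} (hp : p.IsHamiltonianCycle) :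
    ∑ e ∈ p.edges.toFinset, splitLabelling A e = 0 := by
  have h := hp.sum_edges_eq_two_nsmul (2 * splitLabelling A ·) (splitPotential A)
    fun _ _ hxy => two_mul_splitLabelling A hxy
  rw [← mul_sum, sum_splitPotential, hA] at h
  simpa using h

end CompleteSplit

end SimpleGraph

/-- For every `n` divisible by `4` there is an `n`-vertex graph `G` with
`δ(G) = 3n/4` and a `±1` edge labelling for which every Hamilton cycle has
discrepancy `0`. -/
theorem exists_graph_all_hamilton_zero_discrepancy (n : ℕ) (hn : 4 ∣ n) :
    ∃ G : SimpleGraph (Fin n),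
      ((@SimpleGraph.minDegree (Fin n) G _ (Classical.decRel G.Adj) : ℕ) : ℝ) = 3 * n / 4 ∧
      ∃ f : Sym2 (Fin n) → ℤ, (∀ e ∈ G.edgeSet, f e = 1 ∨ f e = -1) ∧
        ∀ (u : Fin n) (p : G.Walk u u), p.IsHamiltonianCycle →
          ∑ e ∈ p.edges.toFinset, f e = 0 := by
  classical
  obtain ⟨k, rfl⟩ := hn
  let A : Finset (Fin (4 * k)) := {v | (v : ℕ) < k}
  have hA : #A = k := by rw [Fin.card_filter_val_lt]; omega
  have hAc : #Aᶜ = 3 * #A := by rw [card_compl, Fintype.card_fin, hA]; omega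
  refine ⟨SimpleGraph.completeSplitGraph A, ?_, SimpleGraph.splitLabelling A,
    fun e _ => SimpleGraph.splitLabelling_eq_one_or_eq_neg_one A e,
    fun u p hp => hp.sum_splitLabelling A hAc⟩
  rcases k.eq_zero_or_pos with rfl | hk
  · simp [SimpleGraph.minDegree_of_subsingleton]
  · rw [SimpleGraph.minDegree_completeSplitGraph A (card_pos.1 (by omega)), hAc, hA]
    push_cast
    ring
end

section
/- Let m ∈ ℕ with m ≥ 1, let r := 4m + 1 and let n ∈ ℕ be divisible by 2r(r+1). Let G be the complete balanced (r+1)-partite graph on n vertices (so each vertex class has size n/(r+1) and δ(G) = (1 − 1/(r+1))n). Then there is a labelling f: E(G) → {−1,1} so that every perfect K_r-tiling 𝒯 in G has discrepancy zero, i.e. Σ_{e ∈ E(𝒯)} f(e) = 0. -/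
/-!
Call the last vertex class the apex class. An edge at an apex vertex `x` gets the sign
`(-1) ^ x`, and an edge between two other classes `i, j` gets `g (i - j)`, where `g` is an even
`±1`-function on `ZMod r` summing to zero off `0`. A copy of `K_r` misses exactly one class, and
since the matrix `g (i - j)` has zero off-diagonal row and column sums, its edges avoiding the apex
class cancel; so its discrepancy is `r - 1` times the sign of its apex vertex, if any. A perfect
tiling covers every apex vertex exactly once, and the apex signs cancel as the class size is even.
-/

/-- A perfect `K_r`-tiling of a graph `G`: a collection of vertex-disjoint
copies of `K_r` (given as `r`-cliques) covering every vertex. -/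
def IsPerfectKTiling {V : Type*} (G : SimpleGraph V) (r : ℕ)
    (T : Finset (Finset V)) : Prop :=
  (∀ S ∈ T, G.IsNClique r S) ∧
  (T : Set (Finset V)).Pairwise (fun S S' => Disjoint S S') ∧
  (∀ v : V, ∃ S ∈ T, v ∈ S)

/-- The edge set `E(𝒯)` of a tiling: the union of the edge sets of its cliques. -/
def tilingEdges {V : Type*} [DecidableEq V] (T : Finset (Finset V)) : Finset (Sym2 V) :=
  T.biUnion fun S => S.sym2.filter fun e => ¬ e.IsDiag

open Finset

namespace Finset

variable {α β M : Type*} [AddCommMonoid M]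

theorem sum_offDiag_eq_sum_sum_erase [DecidableEq α] (s : Finset α) (f : α → α → M) :
    ∑ x ∈ s.offDiag, f x.1 x.2 = ∑ a ∈ s, ∑ b ∈ s.erase a, f a b :=
  sum_finset_product _ _ _ fun x => by simp only [mem_offDiag, mem_erase]; tauto

theorem sum_offDiag_add [DecidableEq α] (s : Finset α) (w : α → M) :
    ∑ x ∈ s.offDiag, (w x.1 + w x.2) = (2 * (#s - 1)) • ∑ a ∈ s, w a := by
  have hswap : ∑ x ∈ s.offDiag, w x.2 = ∑ x ∈ s.offDiag, w x.1 := by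
    refine sum_equiv (Equiv.prodComm α α) (fun x => ?_) fun _ _ => rfl
    simp only [Equiv.prodComm_apply, Prod.fst_swap, Prod.snd_swap, mem_offDiag]
    tauto
  have hfst : ∑ x ∈ s.offDiag, w x.1 = (#s - 1) • ∑ a ∈ s, w a := by
    rw [sum_offDiag_eq_sum_sum_erase s fun a _ => w a, smul_sum]
    exact sum_congr rfl fun a ha => by rw [sum_const, card_erase_of_mem ha]
  rw [sum_add_distrib, hswap, hfst, ← add_nsmul, two_mul]

theorem sum_offDiag_image [DecidableEq β] {s : Finset α} {κ : α → β}
    (hκ : Set.InjOn κ s) (f : β → β → M) :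
    ∑ x ∈ (s.image κ).offDiag, f x.1 x.2 = ∑ x ∈ s.offDiag, f (κ x.1) (κ x.2) := by
  have himage : (s.image κ).offDiag = s.offDiag.image (Prod.map κ κ) := by
    ext ⟨x, y⟩
    simp only [mem_offDiag, mem_image, Prod.exists, Prod.map, Prod.mk.injEq]
    constructor
    · rintro ⟨⟨a, ha, rfl⟩, ⟨b, hb, rfl⟩, hne⟩
      exact ⟨a, b, ⟨ha, hb, fun h => hne (h ▸ rfl)⟩, rfl, rfl⟩
    · rintro ⟨a, b, ⟨ha, hb, hab⟩, rfl, rfl⟩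
      exact ⟨⟨a, ha, rfl⟩, ⟨b, hb, rfl⟩, fun h => hab (hκ ha hb h)⟩
  rw [himage, sum_image]
  · rfl
  · rintro ⟨a, b⟩ hab ⟨c, d⟩ hcd h
    simp only [coe_offDiag, Set.mem_offDiag, mem_coe, Prod.map, Prod.mk.injEq] at hab hcd h
    rw [hκ hab.1 hcd.1 h.1, hκ hab.2.1 hcd.2.1 h.2]

theorem sum_offDiag_mk_eq_two_nsmul [DecidableEq α] (s : Finset α) (p : Sym2 α → M) :
    ∑ x ∈ s.offDiag, p s(x.1, x.2) = 2 • ∑ e ∈ s.sym2 with ¬e.IsDiag, p e := by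
  rw [sym2_eq_image, Sym2.filter_image_mk_not_isDiag, smul_sum]
  change ∑ x ∈ s.offDiag, p (Sym2.mk.uncurry x) = _
  rw [sum_comp]
  refine sum_congr rfl fun e he => ?_
  obtain ⟨⟨a, b⟩, hab, rfl⟩ := mem_image.1 he
  simp only [mem_offDiag] at hab
  have hfiber : {x ∈ s.offDiag | Sym2.mk.uncurry x = Sym2.mk.uncurry (a, b)} =
      {(a, b), (b, a)} := by
    ext ⟨x, y⟩
    grind
  rw [hfiber, card_pair fun h => hab.2.2 (Prod.mk.inj h).1]

end Finset

theorem sum_offDiag_erase_eq_zero {ι M : Type*} [Fintype ι] [DecidableEq ι] [AddCommGroup M]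
    {h : ι → ι → M} (hrow : ∀ i, ∑ j, h i j = h i i) (hcol : ∀ j, ∑ i, h i j = h j j)
    (c : ι) : ∑ x ∈ (univ.erase c).offDiag, h x.1 x.2 = 0 := by
  have hinner (a : ι) (ha : a ∈ univ.erase c) :
      ∑ b ∈ (univ.erase c).erase a, h a b = -h a c := by
    have hc : c ∈ univ.erase a := mem_erase.2 ⟨(ne_of_mem_erase ha).symm, mem_univ c⟩
    rw [erase_right_comm, sum_erase_eq_sub hc, sum_erase_eq_sub (mem_univ a), hrow, sub_self,
      zero_sub]
  rw [sum_offDiag_eq_sum_sum_erase, sum_congr rfl hinner, sum_neg_distrib,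
    sum_erase_eq_sub (mem_univ c), hcol, sub_self, neg_zero]

theorem Fin.sum_neg_one_pow_val_of_even {N : ℕ} (hN : Even N) :
    ∑ x : Fin N, (-1 : ℤ) ^ (x : ℕ) = 0 := by
  obtain ⟨t, rfl⟩ := hN
  rw [Fin.sum_univ_eq_sum_range (fun k => (-1 : ℤ) ^ k)]
  induction t with
  | zero => simp
  | succ k ih =>
    rw [show k + 1 + (k + 1) = k + k + 1 + 1 by ring, sum_range_succ, sum_range_succ, ih,
      pow_succ, (Even.add_self k).neg_one_pow]
    ring

theorem sum_tilingEdges {V M : Type*} [DecidableEq V] [AddCommMonoid M] {T : Finset (Finset V)}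
    (hT : (T : Set (Finset V)).Pairwise Disjoint) (p : Sym2 V → M) :
    ∑ e ∈ tilingEdges T, p e = ∑ S ∈ T, ∑ e ∈ S.sym2 with ¬e.IsDiag, p e := by
  refine sum_biUnion fun S hS S' hS' hne => disjoint_left.2 fun e he he' => ?_
  induction e with
  | _ a b =>
    simp only [mem_filter, mk_mem_sym2_iff] at he he'
    exact disjoint_left.1 (hT hS hS' hne) he.1.1 he'.1.1

theorem IsPerfectKTiling.sum_sum_eq {V M : Type*} [Fintype V] [DecidableEq V] [AddCommMonoid M]
    {G : SimpleGraph V} {r : ℕ} {T : Finset (Finset V)} (hT : IsPerfectKTiling G r T)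
    (w : V → M) : ∑ S ∈ T, ∑ v ∈ S, w v = ∑ v, w v := by
  rw [← sum_biUnion hT.2.1]
  congr
  exact eq_univ_of_forall fun v => mem_biUnion.2 (hT.2.2 v)

namespace SimpleGraph

variable {ι : Type*} {β : ι → Type*} {S : Finset (Σ i, β i)}

theorem IsClique.injOn_fst (hS : (completeMultipartiteGraph β).IsClique (S : Set (Σ i, β i))) :
    Set.InjOn Sigma.fst (S : Set (Σ i, β i)) := fun u hu v hv huv => by
  by_contra hne
  simpa [huv] using hS hu hv hne

theorem IsNClique.exists_image_fst_eq_univ_erase [Fintype ι] [DecidableEq ι] {r : ℕ}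
    (hS : (completeMultipartiteGraph β).IsNClique r S) (hι : Fintype.card ι = r + 1) :
    ∃ c, S.image Sigma.fst = univ.erase c := by
  have hcompl : #(S.image Sigma.fst)ᶜ = 1 := by
    rw [card_compl, card_image_of_injOn hS.isClique.injOn_fst, hS.card_eq, hι]
    omega
  obtain ⟨c, hc⟩ := card_eq_one.1 hcompl
  exact ⟨c, by rw [← compl_compl (S.image Sigma.fst), hc]; ext; simp⟩

end SimpleGraph

namespace BalancedMultipartiteDiscrepancy

variable (m N : ℕ)

/-- Since `4 * m + 1 ≡ 1 (mod 4)`, the involution `v ↦ 4 * m + 1 - v` of the nonzero residues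
swaps the classes `0 ↔ 1` and `2 ↔ 3` mod 4, so this sign is even; every block of four
consecutive values sums to zero. -/
def circulantSign (x : ZMod (4 * m + 1)) : ℤ := if x.val % 4 < 2 then 1 else -1

variable {m N}

theorem circulantSign_neg (x : ZMod (4 * m + 1)) : circulantSign m (-x) = circulantSign m x := by
  rcases eq_or_ne x 0 with rfl | hx0
  · rw [neg_zero]
  have hpos := ZMod.val_pos.2 hx0
  have hlt := ZMod.val_lt x
  rw [circulantSign, circulantSign, ZMod.neg_val, if_neg hx0]
  split_ifs <;> omega

theorem sum_circulantSign : ∑ x, circulantSign m x = 1 := by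
  change ∑ x : Fin (4 * m + 1), (if (x : ℕ) % 4 < 2 then (1 : ℤ) else -1) = 1
  rw [Fin.sum_univ_eq_sum_range (fun v => if v % 4 < 2 then (1 : ℤ) else -1)]
  induction m with
  | zero => simp
  | succ k ih =>
    rw [show 4 * (k + 1) + 1 = 4 * k + 1 + 1 + 1 + 1 + 1 by ring]
    simp only [sum_range_succ, ih]
    rw [if_pos (by omega), if_neg (by omega), if_neg (by omega), if_pos (by omega)]
    norm_num

variable (m N)

def classSign (i j : Fin (4 * m + 1 + 1)) : ℤ :=
  if i = Fin.last _ ∨ j = Fin.last _ then 0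
  else circulantSign m ((i : ℕ) - (j : ℕ) : ZMod (4 * m + 1))

def apexSign (u : (_ : Fin (4 * m + 1 + 1)) × Fin N) : ℤ :=
  if u.1 = Fin.last _ then (-1) ^ (u.2 : ℕ) else 0

def label (u v : (_ : Fin (4 * m + 1 + 1)) × Fin N) : ℤ :=
  apexSign m N u + apexSign m N v + classSign m u.1 v.1

variable {m N}

theorem classSign_comm (i j : Fin (4 * m + 1 + 1)) : classSign m i j = classSign m j i := by
  unfold classSign
  rw [← circulantSign_neg, neg_sub]
  simp only [or_comm]

theorem sum_classSign (i : Fin (4 * m + 1 + 1)) : ∑ j, classSign m i j = classSign m i i := by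
  by_cases hi : i = Fin.last _
  · simp [classSign, hi]
  have hcast : ∀ k : Fin (4 * m + 1), ((k : ℕ) : ZMod (4 * m + 1)) = k := Fin.cast_val_eq_self
  rw [Fin.sum_univ_castSucc]
  simp only [classSign, hi, Fin.castSucc_ne_last, or_self, if_false, or_true, if_true, add_zero,
    sub_self, Fin.val_castSucc, hcast]
  rw [show circulantSign m 0 = 1 by simp [circulantSign]]
  exact (Fintype.sum_equiv (Equiv.subLeft _) _ _ fun _ => rfl).trans sum_circulantSign

theorem sum_apexSign (hN : Even N) : ∑ u, apexSign m N u = 0 := by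
  rw [← univ_sigma_univ, sum_sigma]
  simp [apexSign, Fin.sum_neg_one_pow_val_of_even hN]

theorem label_comm (u v : (_ : Fin (4 * m + 1 + 1)) × Fin N) : label m N u v = label m N v u := by
  rw [label, label, classSign_comm, add_comm (apexSign m N u)]

theorem label_eq_one_or_neg_one {u v : (_ : Fin (4 * m + 1 + 1)) × Fin N} (huv : u.1 ≠ v.1) :
    label m N u v = 1 ∨ label m N u v = -1 := by
  by_cases hu : u.1 = Fin.last _ <;> by_cases hv : v.1 = Fin.last _
  · exact absurd (hu.trans hv.symm) huv
  · simpa [label, apexSign, classSign, hu, hv] using neg_one_pow_eq_or ℤ (u.2 : ℕ)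
  · simpa [label, apexSign, classSign, hu, hv] using neg_one_pow_eq_or ℤ (v.2 : ℕ)
  · simp only [label, apexSign, classSign, circulantSign, hu, hv, or_self, if_false]
    split_ifs <;> simp

theorem sum_offDiag_label {S : Finset ((_ : Fin (4 * m + 1 + 1)) × Fin N)}
    (hS : (SimpleGraph.completeMultipartiteGraph fun _ : Fin (4 * m + 1 + 1) => Fin N).IsNClique
      (4 * m + 1) S) :
    ∑ x ∈ S.offDiag, label m N x.1 x.2 = (8 * m) • ∑ u ∈ S, apexSign m N u := by
  obtain ⟨c, hc⟩ := hS.exists_image_fst_eq_univ_erase (by simp)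
  have hclass : ∑ x ∈ S.offDiag, classSign m x.1.1 x.2.1 = 0 := by
    rw [← sum_offDiag_image hS.isClique.injOn_fst, hc]
    exact sum_offDiag_erase_eq_zero sum_classSign
      (fun j => by simp_rw [classSign_comm _ j]; exact sum_classSign j) c
  simp only [label]
  rw [sum_add_distrib, hclass, add_zero, sum_offDiag_add, hS.card_eq]
  congr 1
  omega

end BalancedMultipartiteDiscrepancy

open BalancedMultipartiteDiscrepancy in
theorem extremal_example_r_eq_one_mod_four_general (m r n : ℕ) (hr : r = 4 * m + 1)
    (hn : 2 * r * (r + 1) ∣ n) :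
    ∃ f : Sym2 ((_ : Fin (r + 1)) × Fin (n / (r + 1))) → ℤ,
      (∀ e ∈ (SimpleGraph.completeMultipartiteGraph
          fun _ : Fin (r + 1) => Fin (n / (r + 1))).edgeSet, f e = 1 ∨ f e = -1) ∧
      ∀ T : Finset (Finset ((_ : Fin (r + 1)) × Fin (n / (r + 1)))),
        IsPerfectKTiling
          (SimpleGraph.completeMultipartiteGraph fun _ : Fin (r + 1) => Fin (n / (r + 1))) r T →
        ∑ e ∈ tilingEdges T, f e = 0 := by
  subst hr
  set N := n / (4 * m + 1 + 1)
  have hN : Even N :=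
    even_iff_two_dvd.2 <| Nat.dvd_div_of_mul_dvd <| dvd_trans ⟨4 * m + 1, by ring⟩ hn
  refine ⟨Sym2.lift ⟨label m N, label_comm⟩, fun e he => ?_, fun T hT => ?_⟩
  · induction e with
    | _ u v => exact label_eq_one_or_neg_one (by simpa using he)
  · have htwice : 2 • ∑ e ∈ tilingEdges T, Sym2.lift ⟨label m N, label_comm⟩ e = 0 := by
      calc 2 • ∑ e ∈ tilingEdges T, Sym2.lift ⟨label m N, label_comm⟩ e
          = ∑ S ∈ T, ∑ x ∈ S.offDiag, label m N x.1 x.2 := by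
            rw [sum_tilingEdges hT.2.1, smul_sum]
            exact sum_congr rfl fun S _ => (sum_offDiag_mk_eq_two_nsmul S _).symm
        _ = (8 * m) • ∑ u, apexSign m N u := by
            rw [sum_congr rfl fun S hS => sum_offDiag_label (hT.1 S hS), ← smul_sum,
              hT.sum_sum_eq]
        _ = 0 := by rw [sum_apexSign hN, smul_zero]
    simpa using htwice

/-- Extremal example for `r ≡ 1 (mod 4)`: the complete balanced `(r+1)`-partite graph on
`n` vertices admits a `±1`-labelling for which every perfect `K_r`-tiling has discrepancy `0`. -/
theorem extremal_example_r_eq_one_mod_four (m r n : ℕ) (hm : 1 ≤ m) (hr : r = 4 * m + 1)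
    (hn : 2 * r * (r + 1) ∣ n) :
    ∃ f : Sym2 ((_ : Fin (r + 1)) × Fin (n / (r + 1))) → ℤ,
      (∀ e ∈ (SimpleGraph.completeMultipartiteGraph
          fun _ : Fin (r + 1) => Fin (n / (r + 1))).edgeSet, f e = 1 ∨ f e = -1) ∧
      ∀ T : Finset (Finset ((_ : Fin (r + 1)) × Fin (n / (r + 1)))),
        IsPerfectKTiling
          (SimpleGraph.completeMultipartiteGraph fun _ : Fin (r + 1) => Fin (n / (r + 1))) r T →
        ∑ e ∈ tilingEdges T, f e = 0 :=
  extremal_example_r_eq_one_mod_four_general m r n hr hn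
end

section
/- Let r ≥ 3 with r ≡ 0 or 3 (mod 4), and let n ∈ ℕ be divisible by r(r+1). Let K be the complete graph K_{r+1} equipped with a labelling f_K: E(K) → {−1,1} in which exactly half of the (r+1)r/2 edges are labelled 1 and the remaining edges are labelled −1. Let G be the blow-up of K in which every vertex of K is replaced by a class of n/(r+1) vertices, with complete bipartite graphs between classes corresponding to edges of K, and let f: E(G) → {−1,1} be the labelling induced by f_K (an edge between the classes of u and v gets label f_K(uv)). Then every perfect K_r-tiling in G has discrepancy precisely 0 with respect to f. -/
/-- Extremal example for `r ≡ 0, 3 (mod 4)`: in the balanced blow-up of a half-and-half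
`±1`-labelled `K_{r+1}`, with the induced edge labelling, every perfect `K_r`-tiling has
discrepancy exactly `0`.  (The edges of `K_{r+1}` are the non-diagonal elements of
`Sym2 (Fin (r+1))`.) -/
theorem extremal_example_r_eq_zero_or_three_mod_four (r n : ℕ) (hr : 3 ≤ r)
    (hmod : r % 4 = 0 ∨ r % 4 = 3) (hn : r * (r + 1) ∣ n)
    (fK : Sym2 (Fin (r + 1)) → ℤ)
    (hfK : ∀ e : Sym2 (Fin (r + 1)), ¬ e.IsDiag → fK e = 1 ∨ fK e = -1)
    (hhalf : 2 * (Finset.univ.filter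
        fun e : Sym2 (Fin (r + 1)) => ¬ e.IsDiag ∧ fK e = 1).card
      = (Finset.univ.filter fun e : Sym2 (Fin (r + 1)) => ¬ e.IsDiag).card) :
    ∀ T : Finset (Finset ((_ : Fin (r + 1)) × Fin (n / (r + 1)))),
      IsPerfectKTiling
        (SimpleGraph.completeMultipartiteGraph fun _ : Fin (r + 1) => Fin (n / (r + 1))) r T →
      ∑ e ∈ tilingEdges T, fK (Sym2.map Sigma.fst e) = 0 := by
  set m := n / (r + 1) with hm
  intro T hT
  obtain ⟨hclique, hdisj, hcover⟩ := hT
  set E : Finset (Sym2 (Fin (r + 1))) :=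
    Finset.univ.filter (fun e => ¬ e.IsDiag) with hE
  set d : Fin (r + 1) → ℤ := fun i => ∑ e ∈ E.filter (fun e => i ∈ e), fK e with hd
  -- the total sum of labels is zero
  have hTsum : ∑ e ∈ E, fK e = 0 := by
    have h1 : E.filter (fun e => fK e = 1)
        = Finset.univ.filter (fun e : Sym2 (Fin (r + 1)) => ¬ e.IsDiag ∧ fK e = 1) := by
      rw [hE, Finset.filter_filter]
    have hsplit := Finset.sum_filter_add_sum_filter_not E (fun e => fK e = 1) fK
    have hcA : ∀ e ∈ E.filter (fun e => fK e = 1), fK e = 1 :=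
      fun e he => (Finset.mem_filter.mp he).2
    have hcB : ∀ e ∈ E.filter (fun e => ¬ fK e = 1), fK e = -1 := by
      intro e he
      rw [Finset.mem_filter] at he
      rcases hfK e (Finset.mem_filter.mp he.1).2 with h | h
      · exact absurd h he.2
      · exact h
    rw [Finset.sum_congr rfl hcA, Finset.sum_congr rfl hcB] at hsplit
    simp only [Finset.sum_const, nsmul_eq_mul, mul_one, mul_neg_one] at hsplit
    have hcards : (E.filter (fun e => fK e = 1)).card
        + (E.filter (fun e => ¬ fK e = 1)).card = E.card :=
      Finset.card_filter_add_card_filter_not _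
    rw [h1] at hcards
    have hBA : (E.filter (fun e => ¬ fK e = 1)).card
        = (Finset.univ.filter (fun e : Sym2 (Fin (r + 1)) => ¬ e.IsDiag ∧ fK e = 1)).card := by
      omega
    rw [h1, hBA] at hsplit
    omega
  -- every nondiagonal edge has exactly two endpoints
  have hpair : ∀ e ∈ E, (Finset.univ.filter (fun i => i ∈ e)).card = 2 := by
    intro e he
    have hdg : ¬ e.IsDiag := (Finset.mem_filter.mp he).2
    induction e using Sym2.ind with
    | _ a b =>
      rw [Sym2.mk_isDiag_iff] at hdg
      have : Finset.univ.filter (fun i => i ∈ s(a, b)) = {a, b} := by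
        ext i; simp [Sym2.mem_iff]
      rw [this, Finset.card_pair hdg]
  -- sum of vertex-degrees is twice the total
  have hdd : ∑ i : Fin (r + 1), d i = 0 := by
    have hstep : ∀ i : Fin (r + 1), d i = ∑ e ∈ E, if i ∈ e then fK e else 0 :=
      fun i => (Finset.sum_filter _ _)
    calc ∑ i : Fin (r + 1), d i
        = ∑ i : Fin (r + 1), ∑ e ∈ E, if i ∈ e then fK e else 0 :=
          Finset.sum_congr rfl fun i _ => hstep i
      _ = ∑ e ∈ E, ∑ i : Fin (r + 1), if i ∈ e then fK e else 0 := Finset.sum_comm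
      _ = ∑ e ∈ E, 2 * fK e := by
          refine Finset.sum_congr rfl fun e he => ?_
          rw [← Finset.sum_filter, Finset.sum_const, hpair e he]
          simp [two_smul, two_mul]
      _ = 2 * ∑ e ∈ E, fK e := by rw [Finset.mul_sum]
      _ = 0 := by rw [hTsum]; ring
  -- injectivity of the projection on each tile
  have hinj : ∀ S ∈ T, Set.InjOn (Sigma.fst : ((_ : Fin (r + 1)) × Fin m) → Fin (r + 1)) ↑S := by
    intro S hS a ha b hb hab
    by_contra hne
    exact (hclique S hS).1 ha hb hne hab
  have hcard : ∀ S ∈ T, (S.image Sigma.fst).card = r := by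
    intro S hS
    rw [Finset.card_image_of_injOn (hinj S hS), (hclique S hS).2]
  classical
  -- the missed part of each tile
  set miss : Finset ((_ : Fin (r + 1)) × Fin m) → Fin (r + 1) := fun S =>
    if h : ((S.image Sigma.fst)ᶜ).Nonempty then ((S.image Sigma.fst)ᶜ).min' h else 0
    with hmissdef
  have hmiss : ∀ S ∈ T, (S.image Sigma.fst)ᶜ = {miss S} := by
    intro S hS
    have h1 : ((S.image Sigma.fst)ᶜ).card = 1 := by
      rw [Finset.card_compl, hcard S hS, Fintype.card_fin]
      omega
    obtain ⟨i, hi⟩ := Finset.card_eq_one.mp h1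
    have : miss S = i := by
      rw [hmissdef]
      simp [hi]
    rw [hi, this]
  have hmem_iff : ∀ S ∈ T, ∀ a : Fin (r + 1),
      a ∈ S.image Sigma.fst ↔ a ≠ miss S := by
    intro S hS a
    rw [← not_iff_not, not_not, ← Finset.mem_compl, hmiss S hS, Finset.mem_singleton]
  -- injectivity of edge projection on each tile's sym2
  have hinjsym : ∀ S ∈ T, ∀ x ∈ S.sym2, ∀ y ∈ S.sym2,
      Sym2.map Sigma.fst x = Sym2.map Sigma.fst y → x = y := by
    intro S hS x hx y hy hxy
    induction x using Sym2.ind with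
    | _ a b =>
      induction y using Sym2.ind with
      | _ c e =>
        rw [Finset.mk_mem_sym2_iff] at hx hy
        simp only [Sym2.map_pair_eq, Sym2.eq_iff] at hxy ⊢
        rcases hxy with ⟨h1, h2⟩ | ⟨h1, h2⟩
        · exact Or.inl ⟨hinj S hS hx.1 hy.1 h1, hinj S hS hx.2 hy.2 h2⟩
        · exact Or.inr ⟨hinj S hS hx.1 hy.2 h1, hinj S hS hx.2 hy.1 h2⟩
  have hdiagiff : ∀ S ∈ T, ∀ e ∈ S.sym2,
      ((Sym2.map Sigma.fst e).IsDiag ↔ e.IsDiag) := by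
    intro S hS e he
    induction e using Sym2.ind with
    | _ a b =>
      rw [Finset.mk_mem_sym2_iff] at he
      simp only [Sym2.map_pair_eq, Sym2.mk_isDiag_iff]
      exact ⟨fun h => hinj S hS he.1 he.2 h, fun h => by rw [h]⟩
  -- per-tile discrepancy
  have htile : ∀ S ∈ T,
      (∑ e ∈ S.sym2.filter (fun e => ¬ e.IsDiag), fK (Sym2.map Sigma.fst e))
        = - d (miss S) := by
    intro S hS
    have hfilter : S.sym2.filter (fun e => ¬ e.IsDiag)
        = S.sym2.filter (fun e => ¬ (Sym2.map Sigma.fst e).IsDiag) :=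
      Finset.filter_congr fun e he => by rw [hdiagiff S hS e he]
    have himg : (S.sym2.filter (fun e => ¬ (Sym2.map Sigma.fst e).IsDiag)).image
          (Sym2.map Sigma.fst)
        = ((S.image Sigma.fst).sym2).filter (fun e => ¬ e.IsDiag) := by
      rw [Finset.sym2_image, Finset.filter_image]
    have hcompl : ((S.image Sigma.fst).sym2).filter (fun e => ¬ e.IsDiag)
        = E.filter (fun e => ¬ miss S ∈ e) := by
      ext e
      simp only [Finset.mem_filter, Finset.mem_sym2_iff, hE, Finset.mem_univ, true_and]
      constructor
      · rintro ⟨hmem, hdg⟩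
        exact ⟨hdg, fun hc => (hmem_iff S hS _).mp (hmem _ hc) rfl⟩
      · rintro ⟨hdg, hnm⟩
        exact ⟨fun a ha => (hmem_iff S hS a).mpr (fun h => hnm (h ▸ ha)), hdg⟩
    have hsum : ∑ e ∈ (S.sym2.filter (fun e => ¬ (Sym2.map Sigma.fst e).IsDiag)).image
          (Sym2.map Sigma.fst), fK e
        = ∑ e ∈ S.sym2.filter (fun e => ¬ (Sym2.map Sigma.fst e).IsDiag),
            fK (Sym2.map Sigma.fst e) :=
      Finset.sum_image fun x hx y hy hxy =>
        hinjsym S hS x (Finset.mem_filter.mp hx).1 y (Finset.mem_filter.mp hy).1 hxy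
    have hsplit := Finset.sum_filter_add_sum_filter_not E (fun e => miss S ∈ e) fK
    rw [hTsum] at hsplit
    rw [hfilter, ← hsum, himg, hcompl]
    have hsp2 : d (miss S) + ∑ e ∈ E.filter (fun e => ¬ miss S ∈ e), fK e = 0 := hsplit
    linarith
  -- the part sizes count
  have hpartcount : ∀ i : Fin (r + 1),
      (T.filter (fun S => i ∈ S.image Sigma.fst)).card = m := by
    intro i
    have hP : (Finset.univ.filter (fun v : (_ : Fin (r + 1)) × Fin m => v.1 = i))
        = (Finset.univ : Finset (Fin m)).image (fun x => (⟨i, x⟩ : (_ : Fin (r + 1)) × Fin m)) := by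
      ext ⟨j, x⟩
      simp only [Finset.mem_filter, Finset.mem_univ, true_and, Finset.mem_image]
      constructor
      · rintro rfl; exact ⟨x, rfl⟩
      · rintro ⟨y, hy⟩
        obtain ⟨rfl, -⟩ := Sigma.mk.inj_iff.mp hy
        rfl
    have hPcard : (Finset.univ.filter (fun v : (_ : Fin (r + 1)) × Fin m => v.1 = i)).card = m := by
      rw [hP, Finset.card_image_of_injective _ (fun x y hxy => by
        simpa using (Sigma.mk.inj_iff.mp hxy).2), Finset.card_univ, Fintype.card_fin]
    have hPun : (Finset.univ.filter (fun v : (_ : Fin (r + 1)) × Fin m => v.1 = i))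
        = T.biUnion (fun S => S.filter (fun v => v.1 = i)) := by
      ext v
      simp only [Finset.mem_biUnion, Finset.mem_filter, Finset.mem_univ, true_and]
      constructor
      · intro hv
        obtain ⟨S, hS, hvS⟩ := hcover v
        exact ⟨S, hS, hvS, hv⟩
      · rintro ⟨S, -, -, hv⟩
        exact hv
    have hbd : ∀ S₁ ∈ T, ∀ S₂ ∈ T, S₁ ≠ S₂ →
        Disjoint (S₁.filter (fun v => v.1 = i)) (S₂.filter (fun v => v.1 = i)) := by
      intro S₁ h₁ S₂ h₂ hne
      exact Finset.disjoint_filter_filter (hdisj h₁ h₂ hne)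
    have hone : ∀ S ∈ T, (S.filter (fun v => v.1 = i)).card
        = if i ∈ S.image Sigma.fst then 1 else 0 := by
      intro S hS
      by_cases h : i ∈ S.image Sigma.fst
      · rw [if_pos h]
        obtain ⟨v, hv, rfl⟩ := Finset.mem_image.mp h
        rw [Finset.card_eq_one]
        refine ⟨v, ?_⟩
        ext w
        simp only [Finset.mem_filter, Finset.mem_singleton]
        constructor
        · rintro ⟨hw, hw1⟩
          exact hinj S hS hw hv hw1
        · rintro rfl
          exact ⟨hv, rfl⟩
      · rw [if_neg h, Finset.card_eq_zero, Finset.filter_eq_empty_iff]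
        intro v hv hvi
        exact h (Finset.mem_image.mpr ⟨v, hv, hvi⟩)
    calc (T.filter (fun S => i ∈ S.image Sigma.fst)).card
        = ∑ S ∈ T, if i ∈ S.image Sigma.fst then 1 else 0 := Finset.card_filter _ _
      _ = ∑ S ∈ T, (S.filter (fun v => v.1 = i)).card :=
          Finset.sum_congr rfl fun S hS => (hone S hS).symm
      _ = (T.biUnion (fun S => S.filter (fun v => v.1 = i))).card :=
          (Finset.card_biUnion hbd).symm
      _ = m := by rw [← hPun, hPcard]
  -- fibers of `miss` all have the same size
  have hfiber : ∀ i : Fin (r + 1), (T.filter (fun S => miss S = i)).card = T.card - m := by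
    intro i
    have heq : T.filter (fun S => miss S = i) = T.filter (fun S => ¬ i ∈ S.image Sigma.fst) := by
      refine Finset.filter_congr fun S hS => ?_
      rw [hmem_iff S hS i, not_not, eq_comm]
    have := Finset.card_filter_add_card_filter_not
      (s := T) (p := fun S => i ∈ S.image Sigma.fst)
    rw [heq]
    rw [hpartcount i] at this
    omega
  -- pairwise disjointness of edge sets
  have hedisj : (↑T : Set (Finset ((_ : Fin (r + 1)) × Fin m))).PairwiseDisjoint
      (fun S => S.sym2.filter fun e => ¬ e.IsDiag) := by
    intro S hS S' hS' hne
    have hdS := hdisj hS hS' hne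
    refine Finset.disjoint_left.mpr ?_
    intro e he he'
    have h1 := (Finset.mem_filter.mp he).1
    have h2 := (Finset.mem_filter.mp he').1
    induction e using Sym2.ind with
    | _ a b =>
      rw [Finset.mk_mem_sym2_iff] at h1 h2
      exact (Finset.disjoint_left.mp hdS h1.1) h2.1
  -- putting it all together
  calc ∑ e ∈ tilingEdges T, fK (Sym2.map Sigma.fst e)
      = ∑ S ∈ T, ∑ e ∈ S.sym2.filter (fun e => ¬ e.IsDiag), fK (Sym2.map Sigma.fst e) :=
        Finset.sum_biUnion hedisj
    _ = ∑ S ∈ T, - d (miss S) := Finset.sum_congr rfl htile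
    _ = ∑ i : Fin (r + 1), ∑ S ∈ T.filter (fun S => miss S = i), - d (miss S) :=
        (Finset.sum_fiberwise T miss (fun S => - d (miss S))).symm
    _ = ∑ i : Fin (r + 1), ((T.card - m : ℕ) : ℤ) * (- d i) := by
        refine Finset.sum_congr rfl fun i _ => ?_
        rw [Finset.sum_congr rfl (fun S hS => by
          rw [(Finset.mem_filter.mp hS).2]), Finset.sum_const, hfiber i, nsmul_eq_mul]
    _ = ((T.card - m : ℕ) : ℤ) * (- ∑ i : Fin (r + 1), d i) := by
        rw [← Finset.mul_sum, Finset.sum_neg_distrib]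
    _ = 0 := by rw [hdd]; ring
end

section
/- Let k ≥ 5 and let K be a complete graph on k vertices with an edge labelling f: E(K) → {−1,1} satisfying f(ab) + f(cd) = f(ac) + f(bd) for all distinct vertices a, b, c, d of K. Then one of the following holds: every edge of K is a 1-edge (K is a K_k^+); every edge of K is a (−1)-edge (K is a K_k^−); K is a (K_k,+)-star; or K is a (K_k,−)-star. -/
/-- A `±1`-labelled complete graph `K_k` (`k ≥ 5`) satisfying
`f(ab) + f(cd) = f(ac) + f(bd)` for all distinct vertices `a, b, c, d` is one of:
all `1`-edges (`K_k^+`), all `(-1)`-edges (`K_k^-`), a `(K_k,+)`-star (the `1`-edges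
are exactly those through a single head vertex), or a `(K_k,-)`-star. -/
theorem labelled_clique_classification (k : ℕ) (hk : 5 ≤ k)
    (f : Sym2 (Fin k) → ℤ)
    (hf : ∀ e : Sym2 (Fin k), ¬ e.IsDiag → f e = 1 ∨ f e = -1)
    (hpar : ∀ a b c d : Fin k, a ≠ b → a ≠ c → a ≠ d → b ≠ c → b ≠ d → c ≠ d →
      f s(a, b) + f s(c, d) = f s(a, c) + f s(b, d)) :
    (∀ a b : Fin k, a ≠ b → f s(a, b) = 1) ∨
    (∀ a b : Fin k, a ≠ b → f s(a, b) = -1) ∨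
    (∃ head : Fin k, ∀ a b : Fin k, a ≠ b →
      (f s(a, b) = 1 ↔ a = head ∨ b = head)) ∨
    (∃ head : Fin k, ∀ a b : Fin k, a ≠ b →
      (f s(a, b) = -1 ↔ a = head ∨ b = head)) := by
  classical
  -- two fresh vertices avoiding any two given vertices
  have fresh2 : ∀ a b : Fin k, ∃ p q : Fin k, p ≠ a ∧ p ≠ b ∧ q ≠ a ∧ q ≠ b ∧ p ≠ q := by
    intro a b
    have hcard : 1 < (Finset.univ \ {a, b} : Finset (Fin k)).card := by
      rw [Finset.card_sdiff_of_subset (Finset.subset_univ _)]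
      have h2 : ({a, b} : Finset (Fin k)).card ≤ 2 :=
        (Finset.card_insert_le _ _).trans (by simp)
      have : (Finset.univ : Finset (Fin k)).card = k := by simp
      omega
    obtain ⟨p, hp, q, hq, hpq⟩ := Finset.one_lt_card.mp hcard
    simp only [Finset.mem_sdiff, Finset.mem_insert, Finset.mem_singleton, not_or] at hp hq
    exact ⟨p, q, hp.2.1, hp.2.2, hq.2.1, hq.2.2, hpq⟩
  -- choose for each vertex a pair of fresh vertices
  have hex : ∀ a : Fin k, ∃ p q : Fin k, p ≠ a ∧ q ≠ a ∧ p ≠ q := by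
    intro a
    obtain ⟨p, q, h1, _, h3, _, h5⟩ := fresh2 a a
    exact ⟨p, q, h1, h3, h5⟩
  choose P Q hP hQ hPQ using hex
  set h : Fin k → ℤ := fun a => f s(a, P a) + f s(a, Q a) - f s(P a, Q a) with hdef
  -- change of first auxiliary vertex
  have hE1 : ∀ a p p' q : Fin k, a ≠ p → a ≠ p' → a ≠ q → p ≠ p' → p ≠ q → p' ≠ q →
      f s(a, p) + f s(a, q) - f s(p, q) = f s(a, p') + f s(a, q) - f s(p', q) := by
    intro a p p' q h1 h2 h3 h4 h5 h6
    have := hpar a p p' q h1 h2 h3 h4 h5 h6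
    linarith
  -- symmetry in the two auxiliary vertices
  have hEsym : ∀ a p q : Fin k,
      f s(a, p) + f s(a, q) - f s(p, q) = f s(a, q) + f s(a, p) - f s(q, p) := by
    intro a p q
    rw [show s(q, p) = s(p, q) from Sym2.eq_swap]
    ring
  -- full well-definedness
  have hE : ∀ a p q p' q' : Fin k, p ≠ a → q ≠ a → p ≠ q → p' ≠ a → q' ≠ a → p' ≠ q' →
      f s(a, p) + f s(a, q) - f s(p, q) = f s(a, p') + f s(a, q') - f s(p', q') := by
    intro a p q p' q' hpa hqa hpq hp'a hq'a hp'q'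
    rcases eq_or_ne q' q with hq'q | hq'q
    · rw [hq'q] at hp'q' ⊢
      rcases eq_or_ne p' p with hp'p | hp'p
      · rw [hp'p]
      · exact hE1 a p p' q hpa.symm hp'a.symm hqa.symm (Ne.symm hp'p) hpq hp'q'
    · rcases eq_or_ne q' p with hq'p | hq'p
      · rw [hq'p] at hp'q' ⊢
        -- goal : E a p q = E a p' p
        rcases eq_or_ne p' q with hp'q2 | hp'q2
        · rw [hp'q2]
          exact hEsym a p q
        · have s1 : f s(a, p) + f s(a, q) - f s(p, q)
              = f s(a, p') + f s(a, q) - f s(p', q) :=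
            hE1 a p p' q hpa.symm hp'a.symm hqa.symm (fun hh => hp'q' hh.symm) hpq hp'q2
          have s2 := hEsym a p' q
          have s3 : f s(a, q) + f s(a, p') - f s(q, p')
              = f s(a, p) + f s(a, p') - f s(p, p') :=
            hE1 a q p p' hqa.symm hpa.symm hp'a.symm (Ne.symm hpq)
              (fun hh => hp'q2 hh.symm) (Ne.symm hp'q')
          have s4 := hEsym a p p'
          linarith
      · -- q' ∉ {p, q}
        have s1 := hEsym a p q
        have s2 : f s(a, q) + f s(a, p) - f s(q, p)
            = f s(a, q') + f s(a, p) - f s(q', p) :=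
          hE1 a q q' p hqa.symm hq'a.symm hpa.symm (fun hh => hq'q hh.symm)
            (Ne.symm hpq) hq'p
        have s3 := hEsym a q' p
        rcases eq_or_ne p' p with hp'p | hp'p
        · rw [hp'p]; linarith
        · have s4 : f s(a, p) + f s(a, q') - f s(p, q')
              = f s(a, p') + f s(a, q') - f s(p', q') :=
            hE1 a p p' q' hpa.symm hp'a.symm hq'a.symm (Ne.symm hp'p)
              (Ne.symm hq'p) hp'q'
          linarith
  have hW : ∀ a p q : Fin k, p ≠ a → q ≠ a → p ≠ q →
      h a = f s(a, p) + f s(a, q) - f s(p, q) := by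
    intro a p q h1 h2 h3
    simp only [hdef]
    exact hE a (P a) (Q a) p q (hP a) (hQ a) (hPQ a) h1 h2 h3
  -- the key identity
  have hkey : ∀ a b : Fin k, a ≠ b → h a + h b = 2 * f s(a, b) := by
    intro a b hab
    obtain ⟨p, q, hpa, hpb, hqa, hqb, hpq⟩ := fresh2 a b
    rw [hW a p q hpa hqa hpq, hW b p q hpb hqb hpq]
    have e1 := hpar a p b q hpa.symm hab hqa.symm hpb hpq (Ne.symm hqb)
    have e2 := hpar a q b p hqa.symm hab hpa.symm hqb (Ne.symm hpq) (Ne.symm hpb)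
    rw [show s(q, p) = s(p, q) from Sym2.eq_swap] at e2
    linarith
  have hval : ∀ a b : Fin k, a ≠ b → h a + h b = 2 ∨ h a + h b = -2 := by
    intro a b hab
    have hd : ¬ (s(a, b)).IsDiag := by simp [Sym2.mk_isDiag_iff, hab]
    rcases hf _ hd with hv | hv <;> [left; right] <;>
      rw [hkey a b hab, hv] <;> ring
  by_cases hc : ∀ a b : Fin k, h a = h b
  · -- constant case
    have hzo : (⟨0, by omega⟩ : Fin k) ≠ ⟨1, by omega⟩ := by simp
    have hf01 := hf s((⟨0, by omega⟩ : Fin k), (⟨1, by omega⟩ : Fin k))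
      (by simp [Sym2.mk_isDiag_iff])
    have hall : ∀ a b : Fin k, a ≠ b →
        f s(a, b) = f s((⟨0, by omega⟩ : Fin k), (⟨1, by omega⟩ : Fin k)) := by
      intro a b hab
      have k1 := hkey a b hab
      have k2 := hkey _ _ hzo
      have e1 := hc a ⟨0, by omega⟩
      have e2 := hc b ⟨1, by omega⟩
      linarith
    rcases hf01 with hv | hv
    · left; intro a b hab; rw [hall a b hab, hv]
    · right; left; intro a b hab; rw [hall a b hab, hv]
  · -- non-constant case : star
    push_neg at hc
    obtain ⟨u, v, huv⟩ := hc
    have huvne : u ≠ v := fun hh => huv (by rw [hh])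
    have hw : ∀ w : Fin k, w ≠ u → w ≠ v → 2 * h w = -(h u + h v) := by
      intro w hwu hwv
      have h1 := hval u w (Ne.symm hwu)
      have h2 := hval v w (Ne.symm hwv)
      rcases h1 with h1 | h1 <;> rcases h2 with h2 | h2 <;> omega
    obtain ⟨w, -, hwu, hwv, -, -, -⟩ := fresh2 u v
    have hw0 := hw w hwu hwv
    have h1 := hval u w (Ne.symm hwu)
    have h2 := hval v w (Ne.symm hwv)
    have h3 := hval u v huvne
    have hhead : ∃ head : Fin k, ∃ c : ℤ, (c = 1 ∨ c = -1) ∧ h head = 3 * c ∧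
        ∀ a : Fin k, a ≠ head → h a = -c := by
      have hcases : (h u = 3 ∧ h v = -1) ∨ (h v = 3 ∧ h u = -1) ∨
          (h u = -3 ∧ h v = 1) ∨ (h v = -3 ∧ h u = 1) := by omega
      rcases hcases with ⟨e1, e2⟩ | ⟨e1, e2⟩ | ⟨e1, e2⟩ | ⟨e1, e2⟩
      · refine ⟨u, 1, Or.inl rfl, by omega, ?_⟩
        intro a ha
        rcases eq_or_ne a v with rfl | hav
        · omega
        · have := hw a ha hav; omega
      · refine ⟨v, 1, Or.inl rfl, by omega, ?_⟩
        intro a ha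
        rcases eq_or_ne a u with rfl | hau
        · omega
        · have := hw a hau ha; omega
      · refine ⟨u, -1, Or.inr rfl, by omega, ?_⟩
        intro a ha
        rcases eq_or_ne a v with rfl | hav
        · omega
        · have := hw a ha hav; omega
      · refine ⟨v, -1, Or.inr rfl, by omega, ?_⟩
        intro a ha
        rcases eq_or_ne a u with rfl | hau
        · omega
        · have := hw a hau ha; omega
    obtain ⟨head, c, hcpm, hh, hrest⟩ := hhead
    have hiff : ∀ a b : Fin k, a ≠ b → (f s(a, b) = c ↔ a = head ∨ b = head) := by
      intro a b hab
      have hk2 := hkey a b hab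
      constructor
      · intro hfab
        by_contra hcon
        push_neg at hcon
        have e1 := hrest a hcon.1
        have e2 := hrest b hcon.2
        rcases hcpm with rfl | rfl <;> omega
      · rintro (rfl | rfl)
        · have e2 := hrest b (Ne.symm hab)
          rcases hcpm with rfl | rfl <;> omega
        · have e1 := hrest a hab
          rcases hcpm with rfl | rfl <;> omega
    rcases hcpm with rfl | rfl
    · right; right; left; exact ⟨head, hiff⟩
    · right; right; right; exact ⟨head, hiff⟩
end

section
/- Let K be a complete graph on k ≥ 4 vertices with an edge labelling f: E(K) → {−1,1} satisfying f(ab) + f(cd) = f(ac) + f(bd) for all distinct vertices a, b, c, d of K. Let a be a vertex of K whose (−1)-neighbourhood N⁻(a) := {y ∈ V(K) : f(ay) = −1} has size at least 3. Then all edges of K with both endpoints in N⁻(a) have the same label, i.e. they are either all 1-edges or all (−1)-edges. -/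
/-- In a `±1`-labelled complete graph `K_k` (`k ≥ 4`) satisfying
`f(ab) + f(cd) = f(ac) + f(bd)` for all distinct vertices `a, b, c, d`, if the
`(-1)`-neighbourhood of a vertex `a` has size at least `3`, then all edges inside
this `(-1)`-neighbourhood carry the same label. -/
theorem edges_in_neg_neighbourhood_same_label (k : ℕ) (hk : 4 ≤ k)
    (f : Sym2 (Fin k) → ℤ)
    (hf : ∀ e : Sym2 (Fin k), ¬ e.IsDiag → f e = 1 ∨ f e = -1)
    (hpar : ∀ a b c d : Fin k, a ≠ b → a ≠ c → a ≠ d → b ≠ c → b ≠ d → c ≠ d →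
      f s(a, b) + f s(c, d) = f s(a, c) + f s(b, d))
    (a : Fin k)
    (N : Finset (Fin k)) (hN : N = Finset.univ.filter fun y => y ≠ a ∧ f s(a, y) = -1)
    (hN3 : 3 ≤ N.card) :
    (∀ x ∈ N, ∀ y ∈ N, x ≠ y → f s(x, y) = 1) ∨
    (∀ x ∈ N, ∀ y ∈ N, x ≠ y → f s(x, y) = -1) := by
  have hmem : ∀ x ∈ N, x ≠ a ∧ f s(a, x) = -1 := by
    intro x hx
    rw [hN, Finset.mem_filter] at hx
    exact hx.2
  have hswap : ∀ x y : Fin k, f s(x, y) = f s(y, x) := by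
    intro x y; rw [Sym2.eq_swap]
  -- key lemma: edges inside N sharing a vertex have equal labels
  have L : ∀ x ∈ N, ∀ y ∈ N, ∀ z ∈ N, x ≠ y → x ≠ z → y ≠ z →
      f s(x, z) = f s(y, z) := by
    intro x hx y hy z hz hxy hxz hyz
    obtain ⟨hxa, hfx⟩ := hmem x hx
    obtain ⟨hya, hfy⟩ := hmem y hy
    obtain ⟨hza, hfz⟩ := hmem z hz
    have := hpar a x y z (Ne.symm hxa) (Ne.symm hya) (Ne.symm hza) hxy hxz hyz
    rw [hfx, hfy] at this
    linarith
  -- all edges inside N have equal labels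
  have E : ∀ x ∈ N, ∀ y ∈ N, ∀ u ∈ N, ∀ v ∈ N, x ≠ y → u ≠ v →
      f s(x, y) = f s(u, v) := by
    intro x hx y hy u hu v hv hxy huv
    by_cases hxu : x = u
    · subst hxu
      by_cases hyv : y = v
      · subst hyv; rfl
      · rw [hswap x y, hswap x v]
        exact L y hy v hv x hx hyv (Ne.symm hxy) (Ne.symm huv)
    · by_cases hxv : x = v
      · subst hxv
        by_cases hyu : y = u
        · subst hyu; exact hswap x y
        · rw [hswap x y]
          exact L y hy u hu x hx hyu (Ne.symm hxy) huv
      · by_cases hyu : y = u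
        · subst hyu
          rw [hswap y v]
          exact L x hx v hv y hy hxv hxy (Ne.symm huv)
        · by_cases hyv : y = v
          · subst hyv
            exact L x hx u hu y hy hxu hxy huv
          · have h1 : f s(x, y) = f s(u, y) := L x hx u hu y hy hxu hxy (fun h => hyu h.symm)
            have h2 : f s(u, y) = f s(u, v) := by
              rw [hswap u y, hswap u v]
              exact L y hy v hv u hu hyv hyu (fun h => huv h.symm)
            rw [h1, h2]
  -- pick two distinct elements of N
  have h2 : 2 ≤ N.card := by omega
  obtain ⟨p, hp, q, hq, hpq⟩ := Finset.one_lt_card.mp h2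
  have hdiag : ¬ (s(p, q) : Sym2 (Fin k)).IsDiag := by
    simpa using hpq
  rcases hf s(p, q) hdiag with h1 | h1
  · left
    intro x hx y hy hxy
    rw [E x hx y hy p hp q hq hxy hpq, h1]
  · right
    intro x hx y hy hxy
    rw [E x hx y hy p hp q hq hxy hpq, h1]
end

section
/- Let r ≥ 2 and let F be a graph on p vertices with edge labelling f: E(F) → {−1,1}. Suppose 𝒦 = {H₁, …, H_s} is a K_r-template of F of size s and discrepancy t with respect to f, so that every vertex of F lies in exactly s' := sr/p of the H_i. Let q ∈ ℕ be divisible by s', and let F* be the blow-up of F in which each vertex u of F is replaced by a set V_u of q vertices and each edge uv of F by the complete bipartite graph between V_u and V_v, with labelling f*: E(F*) → {−1,1} induced by f (an edge between V_u and V_v gets label f(uv)). Then F* contains a perfect K_r-tiling 𝒯 with discrepancy exactly qt/s' with respect to f*. -/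
/-- A `K_r`-template `H₁, …, H_s` of `F` of discrepancy `t` yields, in the `q`-fold
blow-up `F*` of `F` with the induced labelling, a perfect `K_r`-tiling with
discrepancy exactly `q·t/s'`. -/
theorem template_blowup_tiling (r p s s' : ℕ) (hr : 2 ≤ r)
    (F : SimpleGraph (Fin p)) (f : Sym2 (Fin p) → ℤ)
    (hf : ∀ e ∈ F.edgeSet, f e = 1 ∨ f e = -1)
    (H : Fin s → Finset (Fin p))
    (hclique : ∀ i : Fin s, F.IsNClique r (H i))
    (hs' : ∀ v : Fin p, (Finset.univ.filter fun i : Fin s => v ∈ H i).card = s')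
    (hsrp : s' * p = s * r)
    (t : ℤ)
    (ht : ∑ i : Fin s, ∑ e ∈ (H i).sym2.filter (fun e => ¬ e.IsDiag), f e = t)
    (q : ℕ) (hq : s' ∣ q) :
    ∃ T : Finset (Finset (Fin p × Fin q)),
      IsPerfectKTiling (SimpleGraph.comap Prod.fst F) r T ∧
      ((∑ e ∈ tilingEdges T, f (Sym2.map Prod.fst e) : ℤ) : ℚ) = (q * t : ℚ) / s' := by
    classical
  rcases Nat.eq_zero_or_pos q with hq0 | hqpos
  · subst hq0
    refine ⟨∅, ⟨?_, ?_, ?_⟩, ?_⟩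
    · intro S hS; simp at hS
    · simp
    · intro v; exact absurd v.2.2 (Nat.not_lt_zero _)
    · simp [tilingEdges]
  obtain ⟨m, hm⟩ := hq
  have hs'pos : 0 < s' := by
    rcases Nat.eq_zero_or_pos s' with h | h
    · subst h; simp at hm; omega
    · exact h
  have k0 : Fin q := ⟨0, hqpos⟩
  -- the index set of clique-slots needing a vertex from the fiber over u
  set A : Fin p → Finset (Fin s × Fin m) :=
    fun u => (Finset.univ.filter (fun i => u ∈ H i)) ×ˢ Finset.univ with hA_def
  have hAc : ∀ (u : Fin p) (c : Fin s × Fin m), c ∈ A u ↔ u ∈ H c.1 := by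
    intro u c; simp [hA_def]
  have hA : ∀ u, (A u).card = q := by
    intro u
    simp [hA_def, Finset.card_product, hs' u, hm]
  let φ : ∀ u : Fin p, {x // x ∈ A u} ≃ Fin q :=
    fun u => (A u).equivFin.trans (finCongr (hA u))
  let σ : Fin p × Fin q → Fin s × Fin m := fun v => ((φ v.1).symm v.2 : {x // x ∈ A v.1}).val
  set S : Fin s × Fin m → Finset (Fin p × Fin q) :=
    fun c => Finset.univ.filter (fun v => σ v = c) with hS_def
  have hmemS : ∀ (c : Fin s × Fin m) (v : Fin p × Fin q),
      v ∈ S c ↔ ∃ h : v.1 ∈ H c.1, v.2 = φ v.1 ⟨c, (hAc v.1 c).mpr h⟩ := by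
    intro c v
    simp only [hS_def, Finset.mem_filter, Finset.mem_univ, true_and]
    constructor
    · intro h
      have hc : c ∈ A v.1 := h ▸ ((φ v.1).symm v.2).2
      refine ⟨(hAc v.1 c).mp hc, ?_⟩
      have : (φ v.1).symm v.2 = ⟨c, hc⟩ := Subtype.ext h
      rw [← (φ v.1).apply_symm_apply v.2, this]
    · rintro ⟨h, hv⟩
      show ((φ v.1).symm v.2).val = c
      rw [hv, Equiv.symm_apply_apply]
  have hmemS' : ∀ (c : Fin s × Fin m) (u : Fin p) (h : u ∈ H c.1),
      (u, φ u ⟨c, (hAc u c).mpr h⟩) ∈ S c := by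
    intro c u h
    exact (hmemS c (u, φ u ⟨c, (hAc u c).mpr h⟩)).mpr ⟨h, rfl⟩
  have hinjOn : ∀ c : Fin s × Fin m, Set.InjOn Prod.fst (S c : Set (Fin p × Fin q)) := by
    intro c v hv w hw h1
    obtain ⟨hv1, hv2⟩ := (hmemS c v).mp hv
    obtain ⟨hw1, hw2⟩ := (hmemS c w).mp hw
    obtain ⟨v1, v2⟩ := v
    obtain ⟨w1, w2⟩ := w
    simp only at h1
    subst h1
    simp only at hv2 hw2
    rw [Prod.mk.injEq]
    exact ⟨rfl, hv2.trans hw2.symm⟩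
  have himg : ∀ c : Fin s × Fin m, (S c).image Prod.fst = H c.1 := by
    intro c
    apply Finset.Subset.antisymm
    · intro u hu
      obtain ⟨v, hv, rfl⟩ := Finset.mem_image.mp hu
      exact ((hmemS c v).mp hv).1
    · intro u hu
      exact Finset.mem_image.mpr ⟨_, hmemS' c u hu, rfl⟩
  have hcard : ∀ c : Fin s × Fin m, (S c).card = r := by
    intro c
    rw [← Finset.card_image_of_injOn (hinjOn c), himg c]
    exact (hclique c.1).2
  have hSclique : ∀ c : Fin s × Fin m, (SimpleGraph.comap Prod.fst F).IsNClique r (S c) := by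
    intro c
    refine ⟨?_, hcard c⟩
    intro v hv w hw hvw
    have h1 : v.1 ∈ H c.1 := ((hmemS c v).mp hv).1
    have h2 : w.1 ∈ H c.1 := ((hmemS c w).mp hw).1
    have hne : v.1 ≠ w.1 := fun h => hvw (hinjOn c hv hw h)
    exact (hclique c.1).1 h1 h2 hne
  have hSne : ∀ c, (S c).Nonempty := by
    intro c
    rw [← Finset.card_pos, hcard c]; omega
  have hSinj : Function.Injective S := by
    intro c c' h
    obtain ⟨v, hv⟩ := hSne c
    have hv' : v ∈ S c' := h ▸ hv
    have e1 : σ v = c := (Finset.mem_filter.mp hv).2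
    have e2 : σ v = c' := (Finset.mem_filter.mp hv').2
    rw [← e1, e2]
  refine ⟨Finset.image S Finset.univ, ⟨?_, ?_, ?_⟩, ?_⟩
  · intro X hX
    obtain ⟨c, _, rfl⟩ := Finset.mem_image.mp hX
    exact hSclique c
  · intro X hX Y hY hXY
    obtain ⟨c, _, rfl⟩ := Finset.mem_image.mp hX
    obtain ⟨c', _, rfl⟩ := Finset.mem_image.mp hY
    rw [Finset.disjoint_left]
    intro v hv hv'
    have e1 : σ v = c := (Finset.mem_filter.mp hv).2
    have e2 : σ v = c' := (Finset.mem_filter.mp hv').2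
    have : c = c' := by rw [← e1, e2]
    exact hXY (congrArg S this)
  · intro v
    exact ⟨S (σ v), Finset.mem_image.mpr ⟨σ v, Finset.mem_univ _, rfl⟩,
      Finset.mem_filter.mpr ⟨Finset.mem_univ _, rfl⟩⟩
  -- discrepancy computation
  have hdisjE : (↑(Finset.image S Finset.univ) : Set (Finset (Fin p × Fin q))).PairwiseDisjoint
      (fun X => X.sym2.filter fun e => ¬ e.IsDiag) := by
    intro X hX Y hY hXY
    simp only [Finset.coe_image, Set.mem_image] at hX hY
    obtain ⟨c, _, rfl⟩ := hX
    obtain ⟨c', _, rfl⟩ := hY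
    rw [Function.onFun, Finset.disjoint_left]
    intro e he he'
    induction e with
    | _ a b =>
      obtain ⟨he1, he2⟩ := Finset.mem_filter.mp he
      obtain ⟨he1', _⟩ := Finset.mem_filter.mp he'
      have ha : a ∈ S c := (Finset.mk_mem_sym2_iff.mp he1).1
      have ha' : a ∈ S c' := (Finset.mk_mem_sym2_iff.mp he1').1
      have e1 : σ a = c := (Finset.mem_filter.mp ha).2
      have e2 : σ a = c' := (Finset.mem_filter.mp ha').2
      exact hXY (by rw [← e1, e2])
  have hsum1 : (∑ e ∈ tilingEdges (Finset.image S Finset.univ), f (Sym2.map Prod.fst e) : ℤ)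
      = ∑ c : Fin s × Fin m, ∑ e ∈ (S c).sym2.filter (fun e => ¬ e.IsDiag),
          f (Sym2.map Prod.fst e) := by
    rw [tilingEdges, Finset.sum_biUnion hdisjE,
      Finset.sum_image (fun x _ y _ h => hSinj h)]
  have hsum2 : ∀ c : Fin s × Fin m,
      ∑ e ∈ (S c).sym2.filter (fun e => ¬ e.IsDiag), f (Sym2.map Prod.fst e)
      = ∑ e ∈ (H c.1).sym2.filter (fun e => ¬ e.IsDiag), f e := by
    intro c
    refine Finset.sum_nbij' (Sym2.map Prod.fst)
      (Sym2.map (fun u => (u, if h : u ∈ H c.1 then φ u ⟨c, (hAc u c).mpr h⟩ else k0)))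
      ?_ ?_ ?_ ?_ ?_
    · intro e he
      induction e with
      | _ a b =>
        obtain ⟨he1, he2⟩ := Finset.mem_filter.mp he
        obtain ⟨ha, hb⟩ := Finset.mk_mem_sym2_iff.mp he1
        rw [Sym2.mk_isDiag_iff] at he2
        refine Finset.mem_filter.mpr ⟨Finset.mk_mem_sym2_iff.mpr
          ⟨((hmemS c a).mp ha).1, ((hmemS c b).mp hb).1⟩, ?_⟩
        rw [Sym2.map_pair_eq, Sym2.mk_isDiag_iff]
        exact fun h => he2 (hinjOn c ha hb h)
    · intro e he
      induction e with
      | _ u w =>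
        obtain ⟨he1, he2⟩ := Finset.mem_filter.mp he
        obtain ⟨hu, hw⟩ := Finset.mk_mem_sym2_iff.mp he1
        rw [Sym2.mk_isDiag_iff] at he2
        refine Finset.mem_filter.mpr ⟨?_, ?_⟩
        · rw [Sym2.map_pair_eq]
          refine Finset.mk_mem_sym2_iff.mpr ⟨?_, ?_⟩
          · simp only [dif_pos hu]; exact hmemS' c u hu
          · simp only [dif_pos hw]; exact hmemS' c w hw
        · rw [Sym2.map_pair_eq, Sym2.mk_isDiag_iff]
          intro h
          exact he2 (congrArg Prod.fst h)
    · intro e he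
      induction e with
      | _ a b =>
        obtain ⟨he1, _⟩ := Finset.mem_filter.mp he
        obtain ⟨ha, hb⟩ := Finset.mk_mem_sym2_iff.mp he1
        rw [Sym2.map_pair_eq, Sym2.map_pair_eq]
        obtain ⟨ha1, ha2⟩ := (hmemS c a).mp ha
        obtain ⟨hb1, hb2⟩ := (hmemS c b).mp hb
        have ga : ((a.1 : Fin p), if h : a.1 ∈ H c.1 then φ a.1 ⟨c, (hAc a.1 c).mpr h⟩ else k0) = a := by
          rw [dif_pos ha1, ← ha2]
        have gb : ((b.1 : Fin p), if h : b.1 ∈ H c.1 then φ b.1 ⟨c, (hAc b.1 c).mpr h⟩ else k0) = b := by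
          rw [dif_pos hb1, ← hb2]
        rw [ga, gb]
    · intro e he
      rw [Sym2.map_map]
      exact congrFun (congrArg Sym2.map rfl) e ▸ (by
        have : (Prod.fst ∘ fun u => ((u, if h : u ∈ H c.1 then φ u ⟨c, (hAc u c).mpr h⟩ else k0) : Fin p × Fin q)) = id := rfl
        rw [this, Sym2.map_id, id_eq])
    · intro e _; rfl
  have hsum3 : (∑ e ∈ tilingEdges (Finset.image S Finset.univ), f (Sym2.map Prod.fst e) : ℤ)
      = (m : ℤ) * t := by
    rw [hsum1]
    calc ∑ c : Fin s × Fin m, ∑ e ∈ (S c).sym2.filter (fun e => ¬ e.IsDiag),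
          f (Sym2.map Prod.fst e)
        = ∑ c : Fin s × Fin m, ∑ e ∈ (H c.1).sym2.filter (fun e => ¬ e.IsDiag), f e := by
          exact Finset.sum_congr rfl (fun c _ => hsum2 c)
      _ = ∑ i : Fin s, ∑ _j : Fin m, ∑ e ∈ (H i).sym2.filter (fun e => ¬ e.IsDiag), f e :=
          Fintype.sum_prod_type _
      _ = (m : ℤ) * t := by
          simp only [Finset.sum_const, Finset.card_univ, Fintype.card_fin, nsmul_eq_mul,
            ← Finset.mul_sum, ht]
  rw [hsum3, hm]
  have hs'Q : (s' : ℚ) ≠ 0 := by exact_mod_cast hs'pos.ne'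
  push_cast
  field_simp
end

section
/- Let G be a graph on an even number n of vertices with edge labelling f: E(G) → {−1,1}, and suppose G contains a Hamilton cycle C with |Σ_{e ∈ E(C)} f(e)| ≥ t for some real t ≥ 0. Then G contains a perfect matching M with |Σ_{e ∈ M} f(e)| ≥ t/2. -/
/-!
Since `n` is even, taking every other edge of the Hamilton cycle splits it into two perfect
matchings. Their discrepancies add up to that of the cycle, so by the triangle inequality one of
them has absolute discrepancy at least `t / 2`.
-/

namespace SimpleGraph.Walk

variable {V : Type*} {G : SimpleGraph V}

def alternateEdges [DecidableEq V] {u v : V} (p : G.Walk u v) (r : ℕ) : Finset (Sym2 V) :=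
  {k ∈ Finset.range p.length | k % 2 = r}.image fun k => s(p.getVert k, p.getVert (k + 1))

section alternateEdges

variable [DecidableEq V] {u v : V} {p : G.Walk u v} {r : ℕ} {e : Sym2 V}

lemma mem_alternateEdges :
    e ∈ p.alternateEdges r ↔
      ∃ k < p.length, k % 2 = r ∧ s(p.getVert k, p.getVert (k + 1)) = e := by
  simp [alternateEdges, and_assoc]

lemma mem_edgeSet_of_mem_alternateEdges (he : e ∈ p.alternateEdges r) : e ∈ G.edgeSet := by
  obtain ⟨k, hk, -, rfl⟩ := mem_alternateEdges.mp he
  exact p.adj_getVert_succ hk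

lemma alternateEdges_zero_union_one :
    p.alternateEdges 0 ∪ p.alternateEdges 1 = p.edges.toFinset := by
  ext e
  simp only [Finset.mem_union, mem_alternateEdges, List.mem_toFinset, List.mem_iff_getElem,
    getElem_edges, length_edges]
  constructor
  · rintro (⟨k, hk, -, rfl⟩ | ⟨k, hk, -, rfl⟩) <;> exact ⟨k, hk, rfl⟩
  · rintro ⟨k, hk, rfl⟩
    rcases Nat.mod_two_eq_zero_or_one k with hr | hr
    exacts [.inl ⟨k, hk, hr, rfl⟩, .inr ⟨k, hk, hr, rfl⟩]

lemma IsTrail.disjoint_alternateEdges (hp : p.IsTrail) :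
    Disjoint (p.alternateEdges 0) (p.alternateEdges 1) := by
  rw [Finset.disjoint_left]
  rintro e he₀ he₁
  obtain ⟨k, hk, hk₀, rfl⟩ := mem_alternateEdges.mp he₀
  obtain ⟨l, hl, hl₁, hlk⟩ := mem_alternateEdges.mp he₁
  have hkl : l = k := by
    have hl' : l < p.edges.length := by simpa
    have hk' : k < p.edges.length := by simpa
    exact hp.edges_nodup.getElem_inj_iff (hi := hl') (hj := hk') |>.mp <| by
      simpa only [getElem_edges] using hlk
  omega

lemma IsTrail.sum_edges_eq_sum_alternateEdges {M : Type*} [AddCommMonoid M] (hp : p.IsTrail)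
    (f : Sym2 V → M) :
    ∑ e ∈ p.edges.toFinset, f e =
      ∑ e ∈ p.alternateEdges 0, f e + ∑ e ∈ p.alternateEdges 1, f e := by
  rw [← alternateEdges_zero_union_one, Finset.sum_union hp.disjoint_alternateEdges]

end alternateEdges

section IsCycle

variable {u v : V} {p : G.Walk u u}

lemma IsCycle.getVert_mem_edge_iff (hp : p.IsCycle) {j k : ℕ} (hj : 1 ≤ j)
    (hjp : j ≤ p.length) (hk : k < p.length) :
    p.getVert j ∈ s(p.getVert k, p.getVert (k + 1)) ↔
      j = k ∨ j = k + 1 ∨ (j = p.length ∧ k = 0) := by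
  have hinj := hp.getVert_injOn
  rw [Sym2.mem_iff]
  constructor
  · rintro (h | h)
    · rcases k.eq_zero_or_pos with rfl | hk₀
      · rw [getVert_zero] at h
        exact .inr <| .inr
          ⟨hinj ⟨hj, hjp⟩ ⟨by omega, le_rfl⟩ (h.trans p.getVert_length.symm), rfl⟩
      · exact .inl <| hinj ⟨hj, hjp⟩ ⟨hk₀, hk.le⟩ h
    · exact .inr <| .inl <| hinj ⟨hj, hjp⟩ ⟨by omega, hk⟩ h
  · rintro (rfl | rfl | ⟨rfl, rfl⟩)
    · exact .inl rfl
    · exact .inr rfl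
    · exact .inl (by rw [getVert_length, getVert_zero])

lemma IsCycle.existsUnique_mem_alternateEdges [DecidableEq V] (hp : p.IsCycle)
    (heven : Even p.length) {r : ℕ} (hr : r < 2) (hv : v ∈ p.support) :
    ∃! e, e ∈ p.alternateEdges r ∧ v ∈ e := by
  have hlen := hp.three_le_length
  obtain ⟨j, hj, hjp, rfl⟩ : ∃ j, 1 ≤ j ∧ j ≤ p.length ∧ p.getVert j = v := by
    obtain ⟨i, rfl, hi⟩ := mem_support_iff_exists_getVert.mp hv
    rcases i.eq_zero_or_pos with rfl | hi₀
    · exact ⟨p.length, by omega, le_rfl, by rw [getVert_length, getVert_zero]⟩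
    · exact ⟨i, hi₀, hi, rfl⟩
  obtain ⟨m, hm⟩ := heven
  -- `v` lies on the edges at positions `j - 1` and `j % p.length`, whose parities differ
  obtain ⟨c, hc, hcr, hcj⟩ :
      ∃ c < p.length, c % 2 = r ∧ (j = c ∨ j = c + 1 ∨ (j = p.length ∧ c = 0)) := by
    by_cases h : (j - 1) % 2 = r
    · exact ⟨j - 1, by omega, h, by omega⟩
    by_cases hj' : j < p.length
    · exact ⟨j, hj', by omega, by omega⟩
    · exact ⟨0, by omega, by omega, by omega⟩
  refine ⟨_, ⟨mem_alternateEdges.mpr ⟨c, hc, hcr, rfl⟩,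
    (hp.getVert_mem_edge_iff hj hjp hc).mpr hcj⟩, ?_⟩
  rintro e ⟨he, hje⟩
  obtain ⟨k, hk, hkr, rfl⟩ := mem_alternateEdges.mp he
  have hkj := (hp.getVert_mem_edge_iff hj hjp hk).mp hje
  obtain rfl : k = c := by omega
  rfl

end IsCycle

end SimpleGraph.Walk

lemma half_le_abs_or_half_le_abs_of_le_abs_add {α : Type*} [Field α] [LinearOrder α]
    [IsStrictOrderedRing α] {a b t : α} (h : t ≤ |a + b|) :
    t / 2 ≤ |a| ∨ t / 2 ≤ |b| := by
  by_contra! hab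
  linarith [abs_add_le a b]

theorem matching_discrepancy_of_hamilton_discrepancy_general (n : ℕ) (hn : Even n)
    (G : SimpleGraph (Fin n)) (f : Sym2 (Fin n) → ℤ)
    (t : ℝ)
    (u : Fin n) (p : G.Walk u u) (hp : p.IsHamiltonianCycle)
    (hdisc : ((|∑ e ∈ p.edges.toFinset, f e| : ℤ) : ℝ) ≥ t) :
    ∃ M : Finset (Sym2 (Fin n)),
      (∀ e ∈ M, e ∈ G.edgeSet) ∧
      (∀ v : Fin n, ∃! e, e ∈ M ∧ v ∈ e) ∧
      ((|∑ e ∈ M, f e| : ℤ) : ℝ) ≥ t / 2 := by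
  have heven : Even p.length := by rwa [hp.length_eq, Fintype.card_fin]
  have hperfect (r : ℕ) (hr : r < 2) (v : Fin n) : ∃! e, e ∈ p.alternateEdges r ∧ v ∈ e :=
    hp.isCycle.existsUnique_mem_alternateEdges heven hr (hp.mem_support v)
  rw [hp.isCycle.isTrail.sum_edges_eq_sum_alternateEdges] at hdisc
  push_cast at hdisc
  rcases half_le_abs_or_half_le_abs_of_le_abs_add hdisc with h | h
  · exact ⟨_, fun _ => p.mem_edgeSet_of_mem_alternateEdges, hperfect 0 (by omega),
      by exact_mod_cast h⟩
  · exact ⟨_, fun _ => p.mem_edgeSet_of_mem_alternateEdges, hperfect 1 (by omega),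
      by exact_mod_cast h⟩

/-- A Hamilton cycle of absolute discrepancy at least `t` yields a perfect matching
of absolute discrepancy at least `t/2`. -/
theorem matching_discrepancy_of_hamilton_discrepancy (n : ℕ) (hn : Even n)
    (G : SimpleGraph (Fin n)) (f : Sym2 (Fin n) → ℤ)
    (hf : ∀ e ∈ G.edgeSet, f e = 1 ∨ f e = -1)
    (t : ℝ) (ht : 0 ≤ t)
    (u : Fin n) (p : G.Walk u u) (hp : p.IsHamiltonianCycle)
    (hdisc : ((|∑ e ∈ p.edges.toFinset, f e| : ℤ) : ℝ) ≥ t) :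
    ∃ M : Finset (Sym2 (Fin n)),
      (∀ e ∈ M, e ∈ G.edgeSet) ∧
      (∀ v : Fin n, ∃! e, e ∈ M ∧ v ∈ e) ∧
      ((|∑ e ∈ M, f e| : ℤ) : ℝ) ≥ t / 2 :=
  matching_discrepancy_of_hamilton_discrepancy_general n hn G f t u p hp hdisc
end
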